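/- Let Φ = (K_{p,q}, φ) be a T-gain graph on the complete bipartite graph K_{p,q}. Then the largest eigenvalue of A(Φ) satisfies λ_1(A(Φ)) ≤ sqrt(pq), with equality if and only if Φ is balanced. -/

import Mathlib

open scoped Classical

variable {V : Type*}

/-- The adjacency matrix of a `𝕋`-gain graph `Φ = (G, φ)`. -/
noncomputable def gainAdj [Fintype V] (G : SimpleGraph V) (φ : V → V → ℂ) :
    Matrix V V ℂ := fun i j => if G.Adj i j then φ i j else 0

/-- `φ` is a complex unit gain function on `G`: each gain is a unit complex number and
`φ(e_{ji}) = φ(e_{ij})⁻¹`. -/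
def IsGain (G : SimpleGraph V) (φ : V → V → ℂ) : Prop :=
  (∀ i j, G.Adj i j → ‖φ i j‖ = 1) ∧ (∀ i j, G.Adj i j → φ i j * φ j i = 1)

/-- The gain of a walk: the product of the gains of its (oriented) edges. -/
noncomputable def walkGain (φ : V → V → ℂ) {G : SimpleGraph V} {u v : V} (p : G.Walk u v) : ℂ :=
  (p.darts.map (fun d => φ d.toProd.1 d.toProd.2)).prod

/-- A gain graph is balanced if every cycle has gain `1`. -/
def IsBalanced (G : SimpleGraph V) (φ : V → V → ℂ) : Prop :=
  ∀ (v : V) (p : G.Walk v v), p.IsCycle → walkGain φ p = 1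

/-- `Σ_{C ∈ C_i(G)} Re(φ(C))`: each unoriented, unrooted cycle of length `i` corresponds to
exactly `2·i` rooted oriented cycle walks, all having the same real part of the gain. -/
noncomputable def cycleRSum (G : SimpleGraph V) (φ : V → V → ℂ) (i : ℕ) : ℝ :=
  (∑ᶠ q : {q : Σ' v : V, G.Walk v v // q.snd.IsCycle ∧ q.snd.length = i},
      (walkGain φ q.1.snd).re) / (2 * i)

/-!
Write an eigenvector of `A(Φ)` for the eigenvalue `μ` as `x = (y, z)` along the two sides of
`K_{p,q}`. The eigenvalue equations give `2 Re Σ_{a,b} conj(y_a) φ(a,b) z_b = μ ‖x‖²`, and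
expanding squares turns this into
`Σ_{a,b} |√p y_a - √q φ(a,b) z_b|² = √(pq) (√(pq) - μ) ‖x‖²`.
Hence `μ ≤ √(pq)`, and `μ = √(pq)` forces `φ(a,b) = f(a) / f(b)` for the nowhere vanishing
`f = (√p y, √q z)`, so that every closed walk has gain `1`. Conversely, balance of the 4-cycles
through a fixed edge `a₀ b₀` yields such an `f`, and then `(√q f_a, √p f_b)` is an eigenvector for
`√(pq)`.
-/

open ComplexConjugate Matrix

theorem walkGain_cons (φ : V → V → ℂ) {G : SimpleGraph V} {u v w : V} (h : G.Adj u v)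
    (p : G.Walk v w) : walkGain φ (.cons h p) = φ u v * walkGain φ p := by
  simp [walkGain]

def IsSwitchingTrivial (G : SimpleGraph V) (φ : V → V → ℂ) : Prop :=
  ∃ f : V → ℂ, (∀ v, f v ≠ 0) ∧ ∀ u v, G.Adj u v → φ u v = f u / f v

theorem walkGain_eq_div {G : SimpleGraph V} {φ : V → V → ℂ} {f : V → ℂ} (hf : ∀ v, f v ≠ 0)
    (hφf : ∀ u v, G.Adj u v → φ u v = f u / f v) {u v : V} (p : G.Walk u v) :
    walkGain φ p = f u / f v := by
  induction p with
  | nil => simp [walkGain, hf]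
  | cons h p ih => rw [walkGain_cons, ih, hφf _ _ h]; field_simp [hf]

theorem IsSwitchingTrivial.isBalanced {G : SimpleGraph V} {φ : V → V → ℂ}
    (h : IsSwitchingTrivial G φ) : IsBalanced G φ := by
  obtain ⟨f, hf, hφf⟩ := h
  intro v p _
  rw [walkGain_eq_div hf hφf, div_self (hf v)]

theorem IsGain.ne_zero {G : SimpleGraph V} {φ : V → V → ℂ} (hφ : IsGain G φ) {u v : V}
    (h : G.Adj u v) : φ u v ≠ 0 :=
  left_ne_zero_of_mul_eq_one (hφ.2 u v h)

theorem IsGain.apply_symm {G : SimpleGraph V} {φ : V → V → ℂ} (hφ : IsGain G φ) {u v : V}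
    (h : G.Adj u v) : φ v u = (φ u v)⁻¹ :=
  eq_inv_of_mul_eq_one_right (hφ.2 u v h)

theorem IsGain.apply_symm_eq_conj {G : SimpleGraph V} {φ : V → V → ℂ} (hφ : IsGain G φ)
    {u v : V} (h : G.Adj u v) : φ v u = conj (φ u v) := by
  rw [hφ.apply_symm h, Complex.inv_eq_conj (hφ.1 u v h)]

theorem Matrix.IsHermitian.exists_eigenvalues_eq {𝕜 n : Type*} [RCLike 𝕜] [Fintype n]
    [DecidableEq n] {A : Matrix n n 𝕜} (hA : A.IsHermitian) {μ : ℝ} {x : n → 𝕜} (hx : x ≠ 0)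
    (hAx : A *ᵥ x = μ • x) : ∃ i, hA.eigenvalues i = μ := by
  have : Module.End.HasEigenvector A.toLin' (μ : 𝕜) x := by
    rw [Module.End.hasEigenvector_iff, Module.End.mem_eigenspace_iff, toLin'_apply, hAx,
      RCLike.real_smul_eq_coe_smul (K := 𝕜)]
    exact ⟨rfl, hx⟩
  have hmem := (Module.End.hasEigenvalue_of_hasEigenvector this).mem_spectrum
  rw [spectrum_toLin', hA.spectrum_eq_image_range] at hmem
  obtain ⟨_, ⟨i, rfl⟩, hi⟩ := hmem
  exact ⟨i, RCLike.ofReal_injective hi⟩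

theorem Complex.norm_ofReal_mul_sub_ofReal_mul_sq {z w c : ℂ} (hc : ‖c‖ = 1) (s t : ℝ) :
    ‖s * z - t * (c * w)‖ ^ 2 =
      s ^ 2 * ‖z‖ ^ 2 + t ^ 2 * ‖w‖ ^ 2 - 2 * s * t * (conj z * c * w).re := by
  have hc' : c.re * c.re + c.im * c.im = 1 := by
    rw [← Complex.normSq_apply, Complex.normSq_eq_norm_sq, hc, one_pow]
  simp only [Complex.sq_norm, Complex.normSq_apply, Complex.sub_re, Complex.sub_im,
    Complex.mul_re, Complex.mul_im, Complex.ofReal_re, Complex.ofReal_im, Complex.conj_re,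
    Complex.conj_im]
  linear_combination (t ^ 2 * (w.re * w.re + w.im * w.im)) * hc'

section CompleteBipartite

variable {α β : Type*} {φ : α ⊕ β → α ⊕ β → ℂ}

local notation "K" => completeBipartiteGraph α β

theorem IsGain.isSwitchingTrivial_of_forall_inl_inr (hφ : IsGain K φ) {f : α ⊕ β → ℂ}
    (hf : ∀ v, f v ≠ 0) (h : ∀ a b, φ (.inl a) (.inr b) = f (.inl a) / f (.inr b)) :
    IsSwitchingTrivial K φ := by
  refine ⟨f, hf, ?_⟩
  rintro (a | b) (a' | b') hadj
  · simp at hadj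
  · exact h a b'
  · rw [hφ.apply_symm (u := .inl a') (by simp), h, inv_div]
  · simp at hadj

theorem IsBalanced.gain_fourCycle_eq_one (hb : IsBalanced K φ) (hφ : IsGain K φ) (a a' : α)
    (b b' : β) :
    φ (.inl a) (.inr b) * φ (.inr b) (.inl a') * φ (.inl a') (.inr b') * φ (.inr b') (.inl a) =
      1 := by
  have h1 := hφ.2 (.inl a) (.inr b) (by simp)
  have h2 := hφ.2 (.inr b) (.inl a') (by simp)
  have h3 := hφ.2 (.inl a') (.inr b') (by simp)
  by_cases ha : a = a'
  · subst ha
    linear_combination φ (.inl a) (.inr b') * φ (.inr b') (.inl a) * h1 + h3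
  by_cases hb' : b = b'
  · subst hb'
    linear_combination φ (.inr b) (.inl a') * φ (.inl a') (.inr b) * h1 + h2
  let c : (completeBipartiteGraph α β).Walk (.inl a) (.inl a) :=
    .cons (v := .inr b) (by simp) <| .cons (v := .inl a') (by simp) <|
      .cons (v := .inr b') (by simp) <| .cons (by simp) .nil
  have hc : c.IsCycle := by
    simp [c, SimpleGraph.Walk.cons_isCycle_iff, SimpleGraph.Walk.cons_isPath_iff, ha, hb',
      Ne.symm ha]
  simpa [c, walkGain, mul_assoc] using hb _ c hc

theorem IsGain.isSwitchingTrivial_of_isBalanced [Nonempty α] [Nonempty β] (hφ : IsGain K φ)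
    (hb : IsBalanced K φ) : IsSwitchingTrivial K φ := by
  obtain ⟨a₀⟩ := ‹Nonempty α›
  obtain ⟨b₀⟩ := ‹Nonempty β›
  set f : α ⊕ β → ℂ := Sum.elim (fun a => φ (.inl a) (.inr b₀))
    (fun b => φ (.inl a₀) (.inr b₀) * φ (.inr b) (.inl a₀))
  have hf : ∀ v, f v ≠ 0 := by
    rintro (a | b)
    · exact hφ.ne_zero (by simp)
    · exact mul_ne_zero (hφ.ne_zero (by simp)) (hφ.ne_zero (by simp))
  refine hφ.isSwitchingTrivial_of_forall_inl_inr hf fun a b => (eq_div_iff (hf _)).mpr ?_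
  have hcycle := hb.gain_fourCycle_eq_one hφ a a₀ b b₀
  have hback := hφ.2 (.inl a) (.inr b₀) (by simp)
  simp only [f, Sum.elim_inl, Sum.elim_inr]
  linear_combination φ (.inl a) (.inr b₀) * hcycle -
    φ (.inl a) (.inr b) * φ (.inr b) (.inl a₀) * φ (.inl a₀) (.inr b₀) * hback

variable [Fintype α] [Fintype β]

theorem gainAdj_completeBipartite_mulVec_inl (φ : α ⊕ β → α ⊕ β → ℂ) (x : α ⊕ β → ℂ) (a : α) :
    (gainAdj K φ *ᵥ x) (.inl a) = ∑ b, φ (.inl a) (.inr b) * x (.inr b) := by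
  simp [gainAdj, mulVec, dotProduct, Fintype.sum_sum_type]

theorem gainAdj_completeBipartite_mulVec_inr (φ : α ⊕ β → α ⊕ β → ℂ) (x : α ⊕ β → ℂ) (b : β) :
    (gainAdj K φ *ᵥ x) (.inr b) = ∑ a, φ (.inr b) (.inl a) * x (.inl a) := by
  simp [gainAdj, mulVec, dotProduct, Fintype.sum_sum_type]

theorem IsGain.two_mul_re_sum_conj_mul_gain_mul (hφ : IsGain K φ) {μ : ℝ} {x : α ⊕ β → ℂ}
    (hAx : gainAdj K φ *ᵥ x = μ • x) :
    2 * (∑ a, ∑ b, conj (x (.inl a)) * φ (.inl a) (.inr b) * x (.inr b)).re =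
      μ * ∑ u, ‖x u‖ ^ 2 := by
  have eig (u : α ⊕ β) : (gainAdj K φ *ᵥ x) u = μ * x u := by
    rw [hAx, Pi.smul_apply, Complex.real_smul]
  have hS : ∑ a, ∑ b, conj (x (.inl a)) * φ (.inl a) (.inr b) * x (.inr b) =
      μ * ∑ a, (‖x (.inl a)‖ ^ 2 : ℂ) := by
    simp_rw [mul_assoc, ← Finset.mul_sum, ← gainAdj_completeBipartite_mulVec_inl, Finset.mul_sum]
    exact Finset.sum_congr rfl fun a _ => by rw [eig, ← Complex.conj_mul']; ring
  have hconjS : conj (∑ a, ∑ b, conj (x (.inl a)) * φ (.inl a) (.inr b) * x (.inr b)) =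
      μ * ∑ b, (‖x (.inr b)‖ ^ 2 : ℂ) := by
    have (a : α) (b : β) : conj (conj (x (.inl a)) * φ (.inl a) (.inr b) * x (.inr b)) =
        conj (x (.inr b)) * (φ (.inr b) (.inl a) * x (.inl a)) := by
      rw [hφ.apply_symm_eq_conj (u := .inl a) (v := .inr b) (by simp), map_mul, map_mul,
        Complex.conj_conj]
      ring
    simp_rw [map_sum, this]
    rw [Finset.sum_comm]
    simp_rw [← Finset.mul_sum, ← gainAdj_completeBipartite_mulVec_inr, Finset.mul_sum]
    exact Finset.sum_congr rfl fun b _ => by rw [eig, ← Complex.conj_mul']; ring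
  apply Complex.ofReal_injective
  rw [← Complex.add_conj, hconjS, hS, Fintype.sum_sum_type]
  push_cast
  ring

theorem IsGain.sum_norm_sq_sub_eq (hφ : IsGain K φ) {μ : ℝ} {x : α ⊕ β → ℂ}
    (hAx : gainAdj K φ *ᵥ x = μ • x) :
    ∑ a, ∑ b, ‖(√(Fintype.card α) : ℂ) * x (.inl a) -
        (√(Fintype.card β) : ℂ) * (φ (.inl a) (.inr b) * x (.inr b))‖ ^ 2 =
      √(Fintype.card α * Fintype.card β) * (√(Fintype.card α * Fintype.card β) - μ) *
        ∑ u, ‖x u‖ ^ 2 := by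
  set p : ℝ := (Fintype.card α : ℝ)
  set q : ℝ := (Fintype.card β : ℝ)
  have hpq : √p * √q = √(p * q) := (Real.sqrt_mul (Nat.cast_nonneg _) q).symm
  have hpq' : √(p * q) * √(p * q) = p * q := Real.mul_self_sqrt (by positivity)
  calc _ = ∑ a, ∑ b, (p * ‖x (.inl a)‖ ^ 2 + q * ‖x (.inr b)‖ ^ 2 -
          2 * √p * √q * (conj (x (.inl a)) * φ (.inl a) (.inr b) * x (.inr b)).re) := by
        refine Finset.sum_congr rfl fun a _ => Finset.sum_congr rfl fun b _ => ?_
        rw [Complex.norm_ofReal_mul_sub_ofReal_mul_sq (hφ.1 _ _ (by simp)),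
          Real.sq_sqrt (Nat.cast_nonneg _), Real.sq_sqrt (Nat.cast_nonneg _)]
    _ = p * q * ∑ u, ‖x u‖ ^ 2 - √p * √q *
          (2 * (∑ a, ∑ b, conj (x (.inl a)) * φ (.inl a) (.inr b) * x (.inr b)).re) := by
        simp only [Finset.sum_add_distrib, Finset.sum_sub_distrib, Finset.sum_const,
          Finset.card_univ, nsmul_eq_mul, ← Finset.mul_sum, Complex.re_sum,
          Fintype.sum_sum_type]
        ring
    _ = _ := by
        rw [hφ.two_mul_re_sum_conj_mul_gain_mul hAx, hpq]
        linear_combination (∑ u, ‖x u‖ ^ 2) * hpq'.symm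

theorem IsGain.le_sqrt_of_mulVec_eq_smul [Nonempty α] [Nonempty β] (hφ : IsGain K φ) {μ : ℝ}
    {x : α ⊕ β → ℂ} (hx : x ≠ 0) (hAx : gainAdj K φ *ᵥ x = μ • x) :
    μ ≤ √(Fintype.card α * Fintype.card β) := by
  have hdefect := hφ.sum_norm_sq_sub_eq hAx
  have hnonneg : 0 ≤ ∑ a : α, ∑ b : β, ‖(√(Fintype.card α) : ℂ) * x (.inl a) -
      (√(Fintype.card β) : ℂ) * (φ (.inl a) (.inr b) * x (.inr b))‖ ^ 2 := by positivity
  have hsqrt : 0 < √(Fintype.card α * Fintype.card β : ℝ) := by positivity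
  obtain ⟨u, hu⟩ := Function.ne_iff.mp hx
  have hx2 : 0 < ∑ u, ‖x u‖ ^ 2 :=
    Finset.sum_pos' (fun _ _ => by positivity) ⟨u, Finset.mem_univ u, by positivity⟩
  nlinarith [mul_pos hsqrt hx2]

theorem IsGain.mul_eq_of_mulVec_eq_sqrt_smul (hφ : IsGain K φ) {x : α ⊕ β → ℂ}
    (hAx : gainAdj K φ *ᵥ x = √(Fintype.card α * Fintype.card β) • x) (a : α) (b : β) :
    (√(Fintype.card α) : ℂ) * x (.inl a) =
      (√(Fintype.card β) : ℂ) * (φ (.inl a) (.inr b) * x (.inr b)) := by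
  have hdefect := hφ.sum_norm_sq_sub_eq hAx
  rw [sub_self, mul_zero, zero_mul, Finset.sum_eq_zero_iff_of_nonneg (fun _ _ => by positivity)]
    at hdefect
  have := (Finset.sum_eq_zero_iff_of_nonneg (fun _ _ => by positivity)).mp
    (hdefect a (Finset.mem_univ a)) b (Finset.mem_univ b)
  rwa [sq_eq_zero_iff, norm_eq_zero, sub_eq_zero] at this

theorem IsGain.isSwitchingTrivial_of_mulVec_eq_sqrt_smul [Nonempty α] [Nonempty β]
    (hφ : IsGain K φ) {x : α ⊕ β → ℂ} (hx : x ≠ 0)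
    (hAx : gainAdj K φ *ᵥ x = √(Fintype.card α * Fintype.card β) • x) :
    IsSwitchingTrivial K φ := by
  set f : α ⊕ β → ℂ :=
    Sum.elim (fun a => √(Fintype.card α) * x (.inl a)) (fun b => √(Fintype.card β) * x (.inr b))
  have hrel (a : α) (b : β) : f (.inl a) = φ (.inl a) (.inr b) * f (.inr b) := by
    simp only [f, Sum.elim_inl, Sum.elim_inr, hφ.mul_eq_of_mulVec_eq_sqrt_smul hAx a b]
    ring
  have hnorm (a : α) (b : β) : ‖f (.inl a)‖ = ‖f (.inr b)‖ := by
    rw [hrel a b, norm_mul, hφ.1 _ _ (by simp), one_mul]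
  obtain ⟨a₀⟩ := ‹Nonempty α›
  obtain ⟨b₀⟩ := ‹Nonempty β›
  have hnorm_const : ∀ v, ‖f v‖ = ‖f (.inr b₀)‖ := by
    rintro (a | b)
    · exact hnorm a b₀
    · rw [← hnorm a₀ b, hnorm a₀ b₀]
  have hf : ∀ v, f v ≠ 0 := by
    obtain ⟨u, hu⟩ := Function.ne_iff.mp hx
    have hfu : f u ≠ 0 := by
      rcases u with a | b <;> simpa [f, Fintype.card_ne_zero] using hu
    intro v
    rw [← norm_ne_zero_iff, hnorm_const] at hfu ⊢
    exact hfu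
  exact hφ.isSwitchingTrivial_of_forall_inl_inr hf fun a b =>
    (eq_div_iff (hf _)).mpr (hrel a b).symm

theorem IsSwitchingTrivial.exists_mulVec_eq_sqrt_smul [Nonempty α] [Nonempty β]
    (h : IsSwitchingTrivial K φ) :
    ∃ x ≠ 0, gainAdj K φ *ᵥ x = √(Fintype.card α * Fintype.card β) • x := by
  obtain ⟨f, hf, hφf⟩ := h
  set p : ℝ := (Fintype.card α : ℝ)
  set q : ℝ := (Fintype.card β : ℝ)
  have hsqrt : ((√(p * q) : ℝ) : ℂ) = (√p : ℂ) * (√q : ℂ) := by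
    rw [Real.sqrt_mul (Nat.cast_nonneg _), Complex.ofReal_mul]
  have hp : (√p : ℂ) * (√p : ℂ) = p := by
    rw [← Complex.ofReal_mul, Real.mul_self_sqrt (Nat.cast_nonneg _)]
  have hq : (√q : ℂ) * (√q : ℂ) = q := by
    rw [← Complex.ofReal_mul, Real.mul_self_sqrt (Nat.cast_nonneg _)]
  refine ⟨Sum.elim (fun a => √q * f (.inl a)) (fun b => √p * f (.inr b)), ?_, ?_⟩
  · obtain ⟨a₀⟩ := ‹Nonempty α›
    refine Function.ne_iff.mpr ⟨.inl a₀, ?_⟩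
    simpa [q, Fintype.card_ne_zero] using hf _
  · have hgain (a : α) (b : β) (c : ℂ) :
        φ (.inl a) (.inr b) * (c * f (.inr b)) = c * f (.inl a) ∧
          φ (.inr b) (.inl a) * (c * f (.inl a)) = c * f (.inr b) := by
      constructor <;> rw [hφf _ _ (by simp)] <;> field_simp [hf]
    ext (a | b)
    · simp only [gainAdj_completeBipartite_mulVec_inl, Sum.elim_inr, Sum.elim_inl,
        (hgain _ _ _).1, Finset.sum_const, Finset.card_univ, nsmul_eq_mul, Pi.smul_apply,
        Complex.real_smul, hsqrt]
      linear_combination (√p : ℂ) * f (.inl a) * hq.symm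
    · simp only [gainAdj_completeBipartite_mulVec_inr, Sum.elim_inr, Sum.elim_inl,
        (hgain _ _ _).2, Finset.sum_const, Finset.card_univ, nsmul_eq_mul, Pi.smul_apply,
        Complex.real_smul, hsqrt]
      linear_combination (√q : ℂ) * f (.inr b) * hp.symm

end CompleteBipartite

/-- For a `𝕋`-gain graph on the complete bipartite graph `K_{p,q}`, the
largest eigenvalue satisfies `λ₁ ≤ √(pq)`, with equality iff `Φ` is balanced. -/
theorem completeBipartite_largest_eigenvalue {p q : ℕ} (hp : 0 < p) (hq : 0 < q)
    (φ : (Fin p ⊕ Fin q) → (Fin p ⊕ Fin q) → ℂ)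
    (hφ : IsGain (completeBipartiteGraph (Fin p) (Fin q)) φ)
    (hA : (gainAdj (completeBipartiteGraph (Fin p) (Fin q)) φ).IsHermitian) :
    (∀ i, hA.eigenvalues i ≤ Real.sqrt (p * q)) ∧
      ((∃ i, hA.eigenvalues i = Real.sqrt (p * q)) ↔
        IsBalanced (completeBipartiteGraph (Fin p) (Fin q)) φ) := by
  have : Nonempty (Fin p) := ⟨⟨0, hp⟩⟩
  have : Nonempty (Fin q) := ⟨⟨0, hq⟩⟩
  have hcard : (Fintype.card (Fin p) : ℝ) * Fintype.card (Fin q) = p * q := by simp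
  have hvec (i : Fin p ⊕ Fin q) : ⇑(hA.eigenvectorBasis i) ≠ 0 :=
    (WithLp.ofLp_eq_zero 2).ne.mpr (hA.eigenvectorBasis.orthonormal.ne_zero i)
  have heig := hA.mulVec_eigenvectorBasis
  refine ⟨fun i => ?_, ⟨fun ⟨i, hi⟩ => ?_, fun hb => ?_⟩⟩
  · simpa [hcard] using hφ.le_sqrt_of_mulVec_eq_smul (hvec i) (heig i)
  · refine (hφ.isSwitchingTrivial_of_mulVec_eq_sqrt_smul (hvec i) ?_).isBalanced
    rw [heig i, hi, hcard]
  · obtain ⟨x, hx, hAx⟩ := (hφ.isSwitchingTrivial_of_isBalanced hb).exists_mulVec_eq_sqrt_smul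
    exact hA.exists_eigenvalues_eq hx (by rwa [hcard] at hAx)
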